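/- arXiv:1709.09329 — 2 statements merged into one kernel-verified Lean document; each statement's English description precedes it below -/
import Mathlib

section
/- Fix distinct indices 1, 2 and a set K of further distinct indices, and regard the Cayley–Menger minors as functions of the variable t = ρ_{12}^2 (all other entries held fixed). Then: (i) d/dt B(0 1 K ; 0 2 K) = B(0 K); and (ii) d/dt B(0 1 2 K) = −2 B(0 1 K ; 0 2 K). -/
inductive CMIdx (m : ℕ) : Type
  | zero : CMIdx m
  | star : CMIdx m
  | pt : Fin m → CMIdx m

/-- Entry of the Cayley–Menger matrix with squared radii `rsq` and squared distances `ρsq`. -/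
def cmEnt {m : ℕ} (rsq : Fin m → ℝ) (ρsq : Fin m → Fin m → ℝ) : CMIdx m → CMIdx m → ℝ
  | CMIdx.zero, CMIdx.zero => 0
  | CMIdx.zero, _ => 1
  | _, CMIdx.zero => 1
  | CMIdx.star, CMIdx.star => 0
  | CMIdx.star, CMIdx.pt j => rsq j
  | CMIdx.pt j, CMIdx.star => rsq j
  | CMIdx.pt j, CMIdx.pt k => if j = k then 0 else ρsq j k

/-- Minor `B(rows ; cols)` of the Cayley–Menger matrix. -/
noncomputable def cmMinor {m : ℕ} (rsq : Fin m → ℝ) (ρsq : Fin m → Fin m → ℝ)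
    (rows cols : List (CMIdx m)) : ℝ :=
  if h : rows.length = cols.length then
    Matrix.det (Matrix.of fun i j : Fin rows.length =>
      cmEnt rsq ρsq (rows.get i) (cols.get (Fin.cast h j)))
  else 0

/-- The squared-distance data with the entry at the symmetric positions `(i,j)`, `(j,i)`
replaced by the variable `t`. -/
def ρmod {m : ℕ} (ρsq : Fin m → Fin m → ℝ) (i j : Fin m) (t : ℝ) :
    Fin m → Fin m → ℝ :=
  fun a b => if (a = i ∧ b = j) ∨ (a = j ∧ b = i) then t else ρsq a b

/-!
By Jacobi's formula `d/dt det M = tr (adj M * M')`, the derivative of a Cayley–Menger minor in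
`t = ρ₁₂²` is the sum of the cofactors of the entries equal to `t`. In `B(0 1 K ; 0 2 K)` there is
one such entry, in row `1` and column `2`, and its cofactor is `B(0 K)`. In `B(0 1 2 K)` there are
two, at `(1, 2)` and `(2, 1)`, with cofactors `-B(0 2 K ; 0 1 K)` and `-B(0 1 K ; 0 2 K)`; these
agree because the first matrix is the transpose of the second, `ρ²` being symmetric.
-/

open Matrix

theorem Matrix.prod_updateCol_apply_perm {n R : Type*} [Fintype n] [DecidableEq n]
    [CommMonoid R] (A : Matrix n n R) (σ : Equiv.Perm n) (q : n) (c : n → R) :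
    ∏ r, A.updateCol q c (σ r) r = (∏ r ∈ Finset.univ.erase q, A (σ r) r) * c (σ q) := by
  rw [← Finset.prod_erase_mul _ _ (Finset.mem_univ q), updateCol_self]
  congr 1
  exact Finset.prod_congr rfl fun r hr => updateCol_ne (Finset.ne_of_mem_erase hr)

theorem Matrix.sum_det_updateCol_eq_trace_adjugate_mul {n R : Type*} [Fintype n] [DecidableEq n]
    [CommRing R] (A B : Matrix n n R) :
    ∑ q, (A.updateCol q fun p => B p q).det = trace (adjugate A * B) := by
  simp only [trace, diag, mul_apply, ← cramer_apply, cramer_eq_adjugate_mulVec, mulVec,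
    dotProduct]

/-- Jacobi's formula. -/
theorem Matrix.hasDerivAt_det {𝕜 𝔸 n : Type*} [NontriviallyNormedField 𝕜]
    [NormedCommRing 𝔸] [NormedAlgebra 𝕜 𝔸] [Fintype n] [DecidableEq n]
    {M : 𝕜 → Matrix n n 𝔸} {M' : Matrix n n 𝔸} {t : 𝕜}
    (h : ∀ p q, HasDerivAt (fun s => M s p q) (M' p q) t) :
    HasDerivAt (fun s => (M s).det) (trace (adjugate (M t) * M')) t := by
  have hterm : ∀ σ : Equiv.Perm n, HasDerivAt (fun s => Equiv.Perm.sign σ • ∏ q, M s (σ q) q)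
      (Equiv.Perm.sign σ • ∑ q, (∏ r ∈ Finset.univ.erase q, M t (σ r) r) • M' (σ q) q) t :=
    fun σ => (HasDerivAt.fun_finsetProd fun q _ => h (σ q) q).const_smul _
  have hsum := HasDerivAt.fun_sum (u := Finset.univ) fun σ _ => hterm σ
  simp only [← det_apply] at hsum
  rw [← sum_det_updateCol_eq_trace_adjugate_mul]
  refine hsum.congr_deriv ?_
  simp only [det_apply, prod_updateCol_apply_perm, smul_eq_mul, Finset.smul_sum]
  exact Finset.sum_comm

section
variable {α : Type*} {n : ℕ}

@[simp]
theorem Fin.cons_two (x : α) (p : Fin (n + 2) → α) :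
    (Fin.cons x p : Fin (n + 3) → α) 2 = p 1 := by
  rw [← Fin.succ_one_eq_two', Fin.cons_succ]

theorem Fin.cons_cons_comp_one_succAbove (x y : α) (f : Fin n → α) :
    (Fin.cons x (Fin.cons y f) : Fin (n + 2) → α) ∘ (1 : Fin (n + 2)).succAbove =
      Fin.cons x f := by
  rw [← Fin.succ_zero_eq_one', Fin.cons_comp_succ_succAbove, Fin.removeNth_zero, Fin.tail_cons]

theorem Fin.cons_cons_cons_comp_two_succAbove (x y z : α) (f : Fin n → α) :
    (Fin.cons x (Fin.cons y (Fin.cons z f)) : Fin (n + 3) → α) ∘ (2 : Fin (n + 3)).succAbove =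
      Fin.cons x (Fin.cons y f) := by
  have h : Fin.removeNth 1 (Fin.cons y (Fin.cons z f) : Fin (n + 2) → α) = Fin.cons y f := by
    rw [← Fin.succ_zero_eq_one']
    exact (Fin.cons_comp_succ_succAbove y (Fin.cons z f) 0).trans (by simp)
  rw [← Fin.succ_one_eq_two', Fin.cons_comp_succ_succAbove, h]

end

def cmMat {m n : ℕ} (rsq : Fin m → ℝ) (ρsq : Fin m → Fin m → ℝ) (R C : Fin n → CMIdx m) :
    Matrix (Fin n) (Fin n) ℝ :=
  Matrix.of fun p q => cmEnt rsq ρsq (R p) (C q)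

section
variable {m : ℕ} (rsq : Fin m → ℝ) (ρsq : Fin m → Fin m → ℝ)

theorem cmMinor_ofFn {n : ℕ} (R C : Fin n → CMIdx m) :
    cmMinor rsq ρsq (List.ofFn R) (List.ofFn C) = (cmMat rsq ρsq R C).det := by
  rw [cmMinor, dif_pos (by simp),
    ← det_submatrix_equiv_self (finCongr (List.length_ofFn : (List.ofFn R).length = n).symm)]
  congr 1
  ext p q
  simp [cmMat]

theorem cmMat_submatrix {n n' : ℕ} (R C : Fin n → CMIdx m) (f g : Fin n' → Fin n) :
    (cmMat rsq ρsq R C).submatrix f g = cmMat rsq ρsq (R ∘ f) (C ∘ g) :=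
  rfl

theorem cmEnt_comm (hsym : ∀ a b, ρsq a b = ρsq b a) (x y : CMIdx m) :
    cmEnt rsq ρsq x y = cmEnt rsq ρsq y x := by
  cases x <;> cases y <;> simp only [cmEnt]
  case pt.pt a b =>
    split_ifs with hab hba hba
    · rfl
    · exact absurd hab.symm hba
    · exact absurd hba.symm hab
    · exact hsym a b

theorem cmMat_transpose (hsym : ∀ a b, ρsq a b = ρsq b a) {n : ℕ} (R C : Fin n → CMIdx m) :
    (cmMat rsq ρsq R C)ᵀ = cmMat rsq ρsq C R :=
  Matrix.ext fun p q => cmEnt_comm rsq ρsq hsym (R q) (C p)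

variable {i j : Fin m}

theorem ρmod_comm (hsym : ∀ a b, ρsq a b = ρsq b a) (t : ℝ) (a b : Fin m) :
    ρmod ρsq i j t a b = ρmod ρsq i j t b a := by
  simp only [ρmod, hsym a b, and_comm, or_comm]

open Classical in
theorem cmEnt_ρmod (hij : i ≠ j) (t : ℝ) (x y : CMIdx m) :
    cmEnt rsq (ρmod ρsq i j t) x y =
      if (x = .pt i ∧ y = .pt j) ∨ (x = .pt j ∧ y = .pt i) then t else cmEnt rsq ρsq x y := by
  cases x <;> cases y <;>
    simp only [cmEnt, ρmod, CMIdx.pt.injEq, reduceCtorEq, false_and, and_false, or_false,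
      if_false]
  case pt.pt a b =>
    split_ifs with hab hvar <;> try rfl
    subst hab
    rcases hvar with ⟨rfl, rfl⟩ | ⟨rfl, rfl⟩ <;> contradiction

open Classical in
theorem hasDerivAt_cmEnt_ρmod (hij : i ≠ j) (x y : CMIdx m) (t : ℝ) :
    HasDerivAt (fun s => cmEnt rsq (ρmod ρsq i j s) x y)
      (if (x = .pt i ∧ y = .pt j) ∨ (x = .pt j ∧ y = .pt i) then 1 else 0) t := by
  simp_rw [cmEnt_ρmod rsq ρsq hij]
  split_ifs
  · exact hasDerivAt_id t
  · exact hasDerivAt_const t _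

open Classical in
theorem hasDerivAt_det_cmMat_ρmod {n : ℕ} (hij : i ≠ j) (R C : Fin n → CMIdx m) (t : ℝ) :
    HasDerivAt (fun s => (cmMat rsq (ρmod ρsq i j s) R C).det)
      (trace (adjugate (cmMat rsq (ρmod ρsq i j t) R C) * Matrix.of fun p q =>
        if (R p = .pt i ∧ C q = .pt j) ∨ (R p = .pt j ∧ C q = .pt i) then 1 else 0)) t :=
  hasDerivAt_det fun p q => hasDerivAt_cmEnt_ρmod rsq ρsq hij (R p) (C q) t

variable {k : ℕ} {K : Fin k → Fin m}

theorem hasDerivAt_det_cmMat_mixed (hij : i ≠ j) (hKi : ∀ s, K s ≠ i) (hKj : ∀ s, K s ≠ j)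
    (t : ℝ) :
    HasDerivAt (fun s => (cmMat rsq (ρmod ρsq i j s)
        (Fin.cons .zero (Fin.cons (.pt i) (CMIdx.pt ∘ K)))
        (Fin.cons .zero (Fin.cons (.pt j) (CMIdx.pt ∘ K)))).det)
      (cmMat rsq (ρmod ρsq i j t) (Fin.cons .zero (CMIdx.pt ∘ K))
        (Fin.cons .zero (CMIdx.pt ∘ K))).det t := by
  refine (hasDerivAt_det_cmMat_ρmod rsq ρsq hij _ _ t).congr_deriv ?_
  set A := cmMat rsq (ρmod ρsq i j t) (Fin.cons .zero (Fin.cons (.pt i) (CMIdx.pt ∘ K)))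
    (Fin.cons .zero (Fin.cons (.pt j) (CMIdx.pt ∘ K)))
  calc _ = adjugate A 1 1 := by simp [trace, mul_apply, Fin.sum_univ_succ, hKi, hKj, hij]
    _ = _ := by
      rw [adjugate_fin_succ_eq_det_submatrix]
      simp [A, cmMat_submatrix, Fin.cons_cons_comp_one_succAbove]

theorem hasDerivAt_det_cmMat_principal (hsym : ∀ a b, ρsq a b = ρsq b a) (hij : i ≠ j)
    (hKi : ∀ s, K s ≠ i) (hKj : ∀ s, K s ≠ j) (t : ℝ) :
    HasDerivAt (fun s => (cmMat rsq (ρmod ρsq i j s)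
        (Fin.cons .zero (Fin.cons (.pt i) (Fin.cons (.pt j) (CMIdx.pt ∘ K))))
        (Fin.cons .zero (Fin.cons (.pt i) (Fin.cons (.pt j) (CMIdx.pt ∘ K))))).det)
      (-2 * (cmMat rsq (ρmod ρsq i j t) (Fin.cons .zero (Fin.cons (.pt i) (CMIdx.pt ∘ K)))
        (Fin.cons .zero (Fin.cons (.pt j) (CMIdx.pt ∘ K)))).det) t := by
  refine (hasDerivAt_det_cmMat_ρmod rsq ρsq hij _ _ t).congr_deriv ?_
  set A := cmMat rsq (ρmod ρsq i j t)
    (Fin.cons .zero (Fin.cons (.pt i) (Fin.cons (.pt j) (CMIdx.pt ∘ K))))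
    (Fin.cons .zero (Fin.cons (.pt i) (Fin.cons (.pt j) (CMIdx.pt ∘ K))))
  calc _ = adjugate A 1 2 + adjugate A 2 1 := by
        simp [trace, mul_apply, Fin.sum_univ_succ, hKi, hKj, hij, hij.symm]
    _ = _ := by
      rw [adjugate_fin_succ_eq_det_submatrix, adjugate_fin_succ_eq_det_submatrix]
      simp only [A, cmMat_submatrix, Fin.cons_cons_comp_one_succAbove,
        Fin.cons_cons_cons_comp_two_succAbove, Fin.val_one, Fin.val_two, Nat.reduceAdd]
      rw [← cmMat_transpose rsq _ (ρmod_comm ρsq hsym t), det_transpose]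
      ring

end

theorem cm_minor_deriv_in_rho_general (m : ℕ)
    (rsq : Fin m → ℝ) (ρsq : Fin m → Fin m → ℝ) (hsym : ∀ a b, ρsq a b = ρsq b a)
    (i j : Fin m) (hij : i ≠ j) (k : ℕ) (K : Fin k → Fin m)
    (hKi : ∀ t, K t ≠ i) (hKj : ∀ t, K t ≠ j) :
    (∀ t0 : ℝ,
      HasDerivAt (fun t : ℝ =>
          cmMinor rsq (ρmod ρsq i j t)
            ([CMIdx.zero, CMIdx.pt i] ++ List.ofFn fun s => CMIdx.pt (K s))
            ([CMIdx.zero, CMIdx.pt j] ++ List.ofFn fun s => CMIdx.pt (K s)))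
        (cmMinor rsq (ρmod ρsq i j t0)
          (CMIdx.zero :: List.ofFn fun s => CMIdx.pt (K s))
          (CMIdx.zero :: List.ofFn fun s => CMIdx.pt (K s))) t0) ∧
    (∀ t0 : ℝ,
      HasDerivAt (fun t : ℝ =>
          cmMinor rsq (ρmod ρsq i j t)
            ([CMIdx.zero, CMIdx.pt i, CMIdx.pt j] ++ List.ofFn fun s => CMIdx.pt (K s))
            ([CMIdx.zero, CMIdx.pt i, CMIdx.pt j] ++ List.ofFn fun s => CMIdx.pt (K s)))
        (-2 * cmMinor rsq (ρmod ρsq i j t0)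
          ([CMIdx.zero, CMIdx.pt i] ++ List.ofFn fun s => CMIdx.pt (K s))
          ([CMIdx.zero, CMIdx.pt j] ++ List.ofFn fun s => CMIdx.pt (K s))) t0) := by
  simp only [List.cons_append, List.nil_append, ← List.ofFn_cons, cmMinor_ofFn]
  exact ⟨hasDerivAt_det_cmMat_mixed rsq ρsq hij hKi hKj,
    hasDerivAt_det_cmMat_principal rsq ρsq hsym hij hKi hKj⟩

/-- Derivatives of Cayley–Menger minors with respect to `t = ρ_{12}²` (identities (39)/(40)
of Aomoto–Machida): (i) `d/dt B(0 1 K ; 0 2 K) = B(0 K)` and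
(ii) `d/dt B(0 1 2 K) = −2 B(0 1 K ; 0 2 K)`. -/
theorem cm_minor_deriv_in_rho (m : ℕ)
    (rsq : Fin m → ℝ) (ρsq : Fin m → Fin m → ℝ) (hsym : ∀ a b, ρsq a b = ρsq b a)
    (i j : Fin m) (hij : i ≠ j) (k : ℕ) (K : Fin k → Fin m)
    (hK : Function.Injective K) (hKi : ∀ t, K t ≠ i) (hKj : ∀ t, K t ≠ j) :
    (∀ t0 : ℝ,
      HasDerivAt (fun t : ℝ =>
          cmMinor rsq (ρmod ρsq i j t)
            ([CMIdx.zero, CMIdx.pt i] ++ List.ofFn fun s => CMIdx.pt (K s))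
            ([CMIdx.zero, CMIdx.pt j] ++ List.ofFn fun s => CMIdx.pt (K s)))
        (cmMinor rsq (ρmod ρsq i j t0)
          (CMIdx.zero :: List.ofFn fun s => CMIdx.pt (K s))
          (CMIdx.zero :: List.ofFn fun s => CMIdx.pt (K s))) t0) ∧
    (∀ t0 : ℝ,
      HasDerivAt (fun t : ℝ =>
          cmMinor rsq (ρmod ρsq i j t)
            ([CMIdx.zero, CMIdx.pt i, CMIdx.pt j] ++ List.ofFn fun s => CMIdx.pt (K s))
            ([CMIdx.zero, CMIdx.pt i, CMIdx.pt j] ++ List.ofFn fun s => CMIdx.pt (K s)))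
        (-2 * cmMinor rsq (ρmod ρsq i j t0)
          ([CMIdx.zero, CMIdx.pt i] ++ List.ofFn fun s => CMIdx.pt (K s))
          ([CMIdx.zero, CMIdx.pt j] ++ List.ofFn fun s => CMIdx.pt (K s))) t0) :=
  cm_minor_deriv_in_rho_general m rsq ρsq hsym i j hij k K hKi hKj
end

section
/- Let P_1, …, P_m ∈ ℝ^n with ρ_{jk}^2 = ‖P_j − P_k‖^2, let r_1^2, …, r_m^2 be arbitrary reals, let L ⊆ {1, …, m} with |L| ≤ n, and let j, k, a ∈ {1, …, m} ∖ L be three distinct indices. Then B(0 a k L ; 0 j k L) · B(0 ⋆ L ; 0 k L) · B(0 j L) + B(0 a j L ; 0 k j L) · B(0 ⋆ L ; 0 j L) · B(0 k L) = B(0 ⋆ k L ; 0 j k L) · B(0 a L ; 0 k L) · B(0 j L) + B(0 ⋆ j L ; 0 k j L) · B(0 a L ; 0 j L) · B(0 k L); that is, the sum B(0 a k L ; 0 j k L) B(0 ⋆ L ; 0 k L)/B(0 k L) + B(0 a j L ; 0 k j L) B(0 ⋆ L ; 0 j L)/B(0 j L) is invariant under exchanging the symbols a and ⋆. -/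
/-!
Every minor in the identity borders the common block `A = B(0 L)`. When `A` is invertible, a
bordered minor is `det A` times the corresponding minor of the Schur complement
`S = D - C A⁻¹ B`, and both sides become the same polynomial in the entries of `S`. A singular
`A` is handled generically: replace it by `X + A` over `R[X]`, whose determinant is monic,
prove the identity in the fraction field of `R[X]` and evaluate at `X = 0`.
-/

open Matrix

/-- For `A = B(0 L)` and `D` the whole Cayley–Menger matrix this is `B(0 u L ; 0 v L)`, with
rows and columns simultaneously reordered as `0 L u`. -/
def bordered {α o ι κ : Type*} (A : Matrix o o α) (B : Matrix o ι α) (C : Matrix ι o α)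
    (D : Matrix ι ι α) (u v : κ → ι) : Matrix (o ⊕ κ) (o ⊕ κ) α :=
  fromBlocks A (B.submatrix id v) (C.submatrix u id) (D.submatrix u v)

theorem submatrix_sumElim_eq_bordered {α o ι κ : Type*} (M : Matrix ι ι α) (p : o → ι)
    (u v : κ → ι) :
    M.submatrix (Sum.elim p u) (Sum.elim p v)
      = bordered (M.submatrix p p) (M.submatrix p id) (M.submatrix id p) M u v := by
  ext (i | i) (j | j) <;> rfl

section

variable {R S : Type*} [CommRing R] [CommRing S] {o ι κ : Type*}

theorem map_bordered (f : R →+* S) (A : Matrix o o R) (B : Matrix o ι R) (C : Matrix ι o R)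
    (D : Matrix ι ι R) (u v : κ → ι) :
    (bordered A B C D u v).map f = bordered (A.map f) (B.map f) (C.map f) (D.map f) u v := by
  simp only [bordered, fromBlocks_map, submatrix_map]

theorem det_bordered_of_invertible [Fintype o] [DecidableEq o] [Fintype κ] [DecidableEq κ]
    (A : Matrix o o R) (B : Matrix o ι R) (C : Matrix ι o R) (D : Matrix ι ι R) [Invertible A]
    (u v : κ → ι) :
    (bordered A B C D u v).det = A.det * ((D - C * ⅟A * B).submatrix u v).det := by
  rw [bordered, det_fromBlocks₁₁]
  congr 2

def exchangeSum [Fintype o] [DecidableEq o] (A : Matrix o o R) (B : Matrix o ι R)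
    (C : Matrix ι o R) (D : Matrix ι ι R) (s a j k : ι) : R :=
  (bordered A B C D ![a, k] ![j, k]).det * (bordered A B C D ![s] ![k]).det
      * (bordered A B C D ![j] ![j]).det
    + (bordered A B C D ![a, j] ![k, j]).det * (bordered A B C D ![s] ![j]).det
      * (bordered A B C D ![k] ![k]).det

theorem map_exchangeSum [Fintype o] [DecidableEq o] (f : R →+* S) (A : Matrix o o R)
    (B : Matrix o ι R) (C : Matrix ι o R) (D : Matrix ι ι R) (s a j k : ι) :
    f (exchangeSum A B C D s a j k)
      = exchangeSum (A.map f) (B.map f) (C.map f) (D.map f) s a j k := by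
  simp only [exchangeSum, map_add, map_mul, RingHom.map_det, RingHom.mapMatrix_apply,
    map_bordered]

theorem exchangeSum_comm_of_invertible [Fintype o] [DecidableEq o] (A : Matrix o o R)
    (B : Matrix o ι R) (C : Matrix ι o R) (D : Matrix ι ι R) [Invertible A] (s a j k : ι) :
    exchangeSum A B C D s a j k = exchangeSum A B C D a s j k := by
  simp only [exchangeSum, det_bordered_of_invertible, det_fin_one, det_fin_two, submatrix_apply,
    cons_val_zero, cons_val_one, cons_val_fin_one]
  ring

open Polynomial in
theorem exchangeSum_comm [IsDomain R] [Fintype o] [DecidableEq o] (A : Matrix o o R)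
    (B : Matrix o ι R) (C : Matrix ι o R) (D : Matrix ι ι R) (s a j k : ι) :
    exchangeSum A B C D s a j k = exchangeSum A B C D a s j k := by
  let φ := algebraMap R[X] (FractionRing R[X])
  have hφ : Function.Injective φ := IsFractionRing.injective _ _
  have : Invertible ((charmatrix (-A)).map φ) := by
    refine invertibleOfIsUnitDet _ (isUnit_iff_ne_zero.2 ?_)
    rw [← RingHom.mapMatrix_apply, ← RingHom.map_det, map_ne_zero_iff φ hφ]
    exact (charpoly_monic (-A)).ne_zero
  have hX : exchangeSum (charmatrix (-A)) (B.map Polynomial.C) (C.map Polynomial.C)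
        (D.map Polynomial.C) s a j k =
       exchangeSum (charmatrix (-A)) (B.map Polynomial.C) (C.map Polynomial.C)
        (D.map Polynomial.C) a s j k := by
    apply hφ
    simpa only [map_exchangeSum, Matrix.map_map] using
      exchangeSum_comm_of_invertible _ _ _ _ s a j k
  have heval : (charmatrix (-A)).map (eval 0) = A := by
    ext x y
    by_cases h : x = y
    · subst h; simp [charmatrix_apply_eq]
    · simp [charmatrix_apply_ne _ _ _ h]
  simpa [map_exchangeSum, heval, Matrix.map_map, Function.comp_def] using
    congrArg (evalRingHom 0) hX

end

theorem det_submatrix_append_append {R ι : Type*} [CommRing R] {a b c : ℕ} (M : Matrix ι ι R)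
    (w : Fin a → ι) (u v : Fin b → ι) (g : Fin c → ι) :
    (M.submatrix (Fin.append (Fin.append w u) g) (Fin.append (Fin.append w v) g)).det
      = (M.submatrix (Sum.elim (Sum.elim w g) u) (Sum.elim (Sum.elim w g) v)).det := by
  let e : (Fin a ⊕ Fin c) ⊕ Fin b ≃ Fin (a + b + c) :=
    (Equiv.sumAssoc _ _ _).trans <| (Equiv.sumCongr (Equiv.refl _) (Equiv.sumComm _ _)).trans <|
      (Equiv.sumAssoc _ _ _).symm.trans <|
        (Equiv.sumCongr finSumFinEquiv (Equiv.refl _)).trans finSumFinEquiv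
  have reindex : ∀ u : Fin b → ι,
      Fin.append (Fin.append w u) g ∘ e = Sum.elim (Sum.elim w g) u := by
    intro u
    ext ((i | i) | i) <;> simp [e]
  rw [← det_submatrix_equiv_self e, submatrix_submatrix, reindex, reindex]

section CayleyMenger

variable {m : ℕ} (rsq : Fin m → ℝ) (ρsq : Fin m → Fin m → ℝ)

theorem cmMinor_ofFn_s17 {N : ℕ} (r c : Fin N → CMIdx m) :
    cmMinor rsq ρsq (List.ofFn r) (List.ofFn c) = ((of (cmEnt rsq ρsq)).submatrix r c).det := by
  rw [cmMinor, dif_pos (by simp),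
    ← det_submatrix_equiv_self (finCongr (List.length_ofFn (f := r)))]
  congr 1
  ext i j
  simp only [List.get_eq_getElem, List.getElem_ofFn, of_apply, submatrix_apply, finCongr_apply]
  rfl

theorem cmMinor_cons_append {k ℓ : ℕ} (z : CMIdx m) (u v : Fin k → CMIdx m)
    (g : Fin ℓ → CMIdx m) :
    cmMinor rsq ρsq (z :: List.ofFn u ++ List.ofFn g) (z :: List.ofFn v ++ List.ofFn g)
      = ((of (cmEnt rsq ρsq)).submatrix (Sum.elim (Sum.elim ![z] g) u)
          (Sum.elim (Sum.elim ![z] g) v)).det := by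
  have hrows : ∀ u : Fin k → CMIdx m,
      z :: List.ofFn u ++ List.ofFn g = List.ofFn (Fin.append (Fin.append ![z] u) g) := by
    intro u
    simp [List.ofFn_fin_append]
  rw [hrows, hrows, cmMinor_ofFn_s17, det_submatrix_append_append]

theorem cmMinor_pair_append {ℓ : ℕ} (z x y : CMIdx m) (g : Fin ℓ → CMIdx m) :
    cmMinor rsq ρsq ([z, x] ++ List.ofFn g) ([z, y] ++ List.ofFn g)
      = (bordered ((of (cmEnt rsq ρsq)).submatrix (Sum.elim ![z] g) (Sum.elim ![z] g))
          ((of (cmEnt rsq ρsq)).submatrix (Sum.elim ![z] g) id)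
          ((of (cmEnt rsq ρsq)).submatrix id (Sum.elim ![z] g)) (of (cmEnt rsq ρsq))
          ![x] ![y]).det := by
  rw [← submatrix_sumElim_eq_bordered]
  exact cmMinor_cons_append rsq ρsq z ![x] ![y] g

theorem cmMinor_triple_append {ℓ : ℕ} (z x₁ x₂ y₁ y₂ : CMIdx m) (g : Fin ℓ → CMIdx m) :
    cmMinor rsq ρsq ([z, x₁, x₂] ++ List.ofFn g) ([z, y₁, y₂] ++ List.ofFn g)
      = (bordered ((of (cmEnt rsq ρsq)).submatrix (Sum.elim ![z] g) (Sum.elim ![z] g))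
          ((of (cmEnt rsq ρsq)).submatrix (Sum.elim ![z] g) id)
          ((of (cmEnt rsq ρsq)).submatrix id (Sum.elim ![z] g)) (of (cmEnt rsq ρsq))
          ![x₁, x₂] ![y₁, y₂]).det := by
  rw [← submatrix_sumElim_eq_bordered]
  exact cmMinor_cons_append rsq ρsq z ![x₁, x₂] ![y₁, y₂] g

end CayleyMenger

theorem cm_star_exchange_identity_general (n m ℓ : ℕ)
    (P : Fin m → EuclideanSpace ℝ (Fin n)) (rsq : Fin m → ℝ)
    (L : Fin ℓ → Fin m)
    (j k a : Fin m) :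
    cmMinor rsq (fun x y => ‖P x - P y‖ ^ 2)
          ([CMIdx.zero, CMIdx.pt a, CMIdx.pt k] ++ List.ofFn fun t => CMIdx.pt (L t))
          ([CMIdx.zero, CMIdx.pt j, CMIdx.pt k] ++ List.ofFn fun t => CMIdx.pt (L t)) *
        cmMinor rsq (fun x y => ‖P x - P y‖ ^ 2)
          ([CMIdx.zero, CMIdx.star] ++ List.ofFn fun t => CMIdx.pt (L t))
          ([CMIdx.zero, CMIdx.pt k] ++ List.ofFn fun t => CMIdx.pt (L t)) *
        cmMinor rsq (fun x y => ‖P x - P y‖ ^ 2)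
          ([CMIdx.zero, CMIdx.pt j] ++ List.ofFn fun t => CMIdx.pt (L t))
          ([CMIdx.zero, CMIdx.pt j] ++ List.ofFn fun t => CMIdx.pt (L t)) +
      cmMinor rsq (fun x y => ‖P x - P y‖ ^ 2)
          ([CMIdx.zero, CMIdx.pt a, CMIdx.pt j] ++ List.ofFn fun t => CMIdx.pt (L t))
          ([CMIdx.zero, CMIdx.pt k, CMIdx.pt j] ++ List.ofFn fun t => CMIdx.pt (L t)) *
        cmMinor rsq (fun x y => ‖P x - P y‖ ^ 2)
          ([CMIdx.zero, CMIdx.star] ++ List.ofFn fun t => CMIdx.pt (L t))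
          ([CMIdx.zero, CMIdx.pt j] ++ List.ofFn fun t => CMIdx.pt (L t)) *
        cmMinor rsq (fun x y => ‖P x - P y‖ ^ 2)
          ([CMIdx.zero, CMIdx.pt k] ++ List.ofFn fun t => CMIdx.pt (L t))
          ([CMIdx.zero, CMIdx.pt k] ++ List.ofFn fun t => CMIdx.pt (L t)) =
    cmMinor rsq (fun x y => ‖P x - P y‖ ^ 2)
          ([CMIdx.zero, CMIdx.star, CMIdx.pt k] ++ List.ofFn fun t => CMIdx.pt (L t))
          ([CMIdx.zero, CMIdx.pt j, CMIdx.pt k] ++ List.ofFn fun t => CMIdx.pt (L t)) *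
        cmMinor rsq (fun x y => ‖P x - P y‖ ^ 2)
          ([CMIdx.zero, CMIdx.pt a] ++ List.ofFn fun t => CMIdx.pt (L t))
          ([CMIdx.zero, CMIdx.pt k] ++ List.ofFn fun t => CMIdx.pt (L t)) *
        cmMinor rsq (fun x y => ‖P x - P y‖ ^ 2)
          ([CMIdx.zero, CMIdx.pt j] ++ List.ofFn fun t => CMIdx.pt (L t))
          ([CMIdx.zero, CMIdx.pt j] ++ List.ofFn fun t => CMIdx.pt (L t)) +
      cmMinor rsq (fun x y => ‖P x - P y‖ ^ 2)
          ([CMIdx.zero, CMIdx.star, CMIdx.pt j] ++ List.ofFn fun t => CMIdx.pt (L t))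
          ([CMIdx.zero, CMIdx.pt k, CMIdx.pt j] ++ List.ofFn fun t => CMIdx.pt (L t)) *
        cmMinor rsq (fun x y => ‖P x - P y‖ ^ 2)
          ([CMIdx.zero, CMIdx.pt a] ++ List.ofFn fun t => CMIdx.pt (L t))
          ([CMIdx.zero, CMIdx.pt j] ++ List.ofFn fun t => CMIdx.pt (L t)) *
        cmMinor rsq (fun x y => ‖P x - P y‖ ^ 2)
          ([CMIdx.zero, CMIdx.pt k] ++ List.ofFn fun t => CMIdx.pt (L t))
          ([CMIdx.zero, CMIdx.pt k] ++ List.ofFn fun t => CMIdx.pt (L t)) := by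
  simp only [cmMinor_pair_append, cmMinor_triple_append]
  exact exchangeSum_comm _ _ _ _ _ _ _ _

/-- Lemma 42 (identity (64)) of Aomoto–Machida, in cross-multiplied form: with `ρ` coming
from points `P_1,…,P_m ∈ ℝⁿ`, `r²` arbitrary, an increasing `L` with `|L| ≤ n`, and
distinct `j, k, a ∉ L`:
`B(0akL;0jkL)·B(0⋆L;0kL)·B(0jL) + B(0ajL;0kjL)·B(0⋆L;0jL)·B(0kL)
 = B(0⋆kL;0jkL)·B(0aL;0kL)·B(0jL) + B(0⋆jL;0kjL)·B(0aL;0jL)·B(0kL)`,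
i.e. the sum is invariant under exchanging the symbols `a` and `⋆`. -/
theorem cm_star_exchange_identity (n m ℓ : ℕ) (hℓ : ℓ ≤ n)
    (P : Fin m → EuclideanSpace ℝ (Fin n)) (rsq : Fin m → ℝ)
    (L : Fin ℓ → Fin m) (hL : StrictMono L)
    (j k a : Fin m) (hjk : j ≠ k) (hja : j ≠ a) (hka : k ≠ a)
    (hLj : ∀ t, L t ≠ j) (hLk : ∀ t, L t ≠ k) (hLa : ∀ t, L t ≠ a) :
    cmMinor rsq (fun x y => ‖P x - P y‖ ^ 2)
          ([CMIdx.zero, CMIdx.pt a, CMIdx.pt k] ++ List.ofFn fun t => CMIdx.pt (L t))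
          ([CMIdx.zero, CMIdx.pt j, CMIdx.pt k] ++ List.ofFn fun t => CMIdx.pt (L t)) *
        cmMinor rsq (fun x y => ‖P x - P y‖ ^ 2)
          ([CMIdx.zero, CMIdx.star] ++ List.ofFn fun t => CMIdx.pt (L t))
          ([CMIdx.zero, CMIdx.pt k] ++ List.ofFn fun t => CMIdx.pt (L t)) *
        cmMinor rsq (fun x y => ‖P x - P y‖ ^ 2)
          ([CMIdx.zero, CMIdx.pt j] ++ List.ofFn fun t => CMIdx.pt (L t))
          ([CMIdx.zero, CMIdx.pt j] ++ List.ofFn fun t => CMIdx.pt (L t)) +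
      cmMinor rsq (fun x y => ‖P x - P y‖ ^ 2)
          ([CMIdx.zero, CMIdx.pt a, CMIdx.pt j] ++ List.ofFn fun t => CMIdx.pt (L t))
          ([CMIdx.zero, CMIdx.pt k, CMIdx.pt j] ++ List.ofFn fun t => CMIdx.pt (L t)) *
        cmMinor rsq (fun x y => ‖P x - P y‖ ^ 2)
          ([CMIdx.zero, CMIdx.star] ++ List.ofFn fun t => CMIdx.pt (L t))
          ([CMIdx.zero, CMIdx.pt j] ++ List.ofFn fun t => CMIdx.pt (L t)) *
        cmMinor rsq (fun x y => ‖P x - P y‖ ^ 2)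
          ([CMIdx.zero, CMIdx.pt k] ++ List.ofFn fun t => CMIdx.pt (L t))
          ([CMIdx.zero, CMIdx.pt k] ++ List.ofFn fun t => CMIdx.pt (L t)) =
    cmMinor rsq (fun x y => ‖P x - P y‖ ^ 2)
          ([CMIdx.zero, CMIdx.star, CMIdx.pt k] ++ List.ofFn fun t => CMIdx.pt (L t))
          ([CMIdx.zero, CMIdx.pt j, CMIdx.pt k] ++ List.ofFn fun t => CMIdx.pt (L t)) *
        cmMinor rsq (fun x y => ‖P x - P y‖ ^ 2)
          ([CMIdx.zero, CMIdx.pt a] ++ List.ofFn fun t => CMIdx.pt (L t))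
          ([CMIdx.zero, CMIdx.pt k] ++ List.ofFn fun t => CMIdx.pt (L t)) *
        cmMinor rsq (fun x y => ‖P x - P y‖ ^ 2)
          ([CMIdx.zero, CMIdx.pt j] ++ List.ofFn fun t => CMIdx.pt (L t))
          ([CMIdx.zero, CMIdx.pt j] ++ List.ofFn fun t => CMIdx.pt (L t)) +
      cmMinor rsq (fun x y => ‖P x - P y‖ ^ 2)
          ([CMIdx.zero, CMIdx.star, CMIdx.pt j] ++ List.ofFn fun t => CMIdx.pt (L t))
          ([CMIdx.zero, CMIdx.pt k, CMIdx.pt j] ++ List.ofFn fun t => CMIdx.pt (L t)) *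
        cmMinor rsq (fun x y => ‖P x - P y‖ ^ 2)
          ([CMIdx.zero, CMIdx.pt a] ++ List.ofFn fun t => CMIdx.pt (L t))
          ([CMIdx.zero, CMIdx.pt j] ++ List.ofFn fun t => CMIdx.pt (L t)) *
        cmMinor rsq (fun x y => ‖P x - P y‖ ^ 2)
          ([CMIdx.zero, CMIdx.pt k] ++ List.ofFn fun t => CMIdx.pt (L t))
          ([CMIdx.zero, CMIdx.pt k] ++ List.ofFn fun t => CMIdx.pt (L t)) :=
  cm_star_exchange_identity_general n m ℓ P rsq L j k a
end
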